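/- For γ = 2 and any operator F satisfying the uniform ellipticity, rotation invariance and positive 1-homogeneity assumptions, the radial principal eigenvalue satisfies Λ·(Ñ₊−2)²/4 ≤ λ̄'_2(F) ≤ λ·(Ñ₋−2)²/4. -/

import Mathlib

open Set Real Filter MeasureTheory Matrix

noncomputable section

/-- The `N × N` diagonal matrix with first diagonal entry `a` and the remaining
`N - 1` diagonal entries equal to `b`. -/
def Dmat (N : ℕ) (a b : ℝ) : Matrix (Fin N) (Fin N) ℝ :=
  Matrix.diagonal (fun i => if (i : ℕ) = 0 then a else b)

/-- Uniform ellipticity with constants `0 < lam ≤ Lam`. -/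
def UnifElliptic (N : ℕ) (lam Lam : ℝ) (F : Matrix (Fin N) (Fin N) ℝ → ℝ) : Prop :=
  ∀ M P : Matrix (Fin N) (Fin N) ℝ, M.IsSymm → P.PosSemidef →
    lam * P.trace ≤ F (M + P) - F M ∧ F (M + P) - F M ≤ Lam * P.trace

/-- Rotation invariance. -/
def RotInvariant (N : ℕ) (F : Matrix (Fin N) (Fin N) ℝ → ℝ) : Prop :=
  ∀ O M : Matrix (Fin N) (Fin N) ℝ, Oᵀ * O = 1 → F (Oᵀ * M * O) = F M

/-- Positive one-homogeneity. -/
def PosHomog (N : ℕ) (F : Matrix (Fin N) (Fin N) ℝ → ℝ) : Prop :=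
  ∀ t : ℝ, 0 < t → ∀ M : Matrix (Fin N) (Fin N) ℝ, F (t • M) = t * F M

/-- The radial principal eigenvalue `λ̄'_γ(F)` on the punctured unit ball. -/
def radialEV (N : ℕ) (F : Matrix (Fin N) (Fin N) ℝ → ℝ) (γ : ℝ) : ℝ :=
  sSup {μ : ℝ | ∃ u : ℝ → ℝ, ContDiffOn ℝ 2 u (Ioo 0 1) ∧
    (∀ r ∈ Ioo (0:ℝ) 1, 0 < u r) ∧
    (∀ r ∈ Ioo (0:ℝ) 1,
      F (Dmat N (deriv (deriv u) r) (deriv u r / r)) + μ * u r * r ^ (-γ) ≤ 0)}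

open Topology

/-!
For the lower bound, `u = r ^ (-β)` with `β ≥ 0` has `u'' ≥ 0 ≥ u'`, so ellipticity bounds
`F (D(u'', u'/r))` by `Λ u'' + λ (N - 1) u' / r`, which makes `u` a supersolution for
`μ = λ (N - 1) β - Λ β (β + 1)`; the choice `β = (Ñ₊ - 2) / 2` maximises this to `Λ (Ñ₊ - 2)² / 4`.

For the upper bound, let `u` be a supersolution with `μ > λ (Ñ₋ - 2)² / 4`. By homogeneity and
ellipticity, `g = r u' / u` obeys the Riccati inequalities `r g' ≤ -ε` for some `ε > 0` and, where
`g ≥ 0`, `r g' ≤ -g²`. The first one forces `g → +∞` as `r → 0⁺`; once `g > 0` on `(0, t]`, the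
second one gives `(1 / g)' ≥ 1 / r` there, and integrating over `[t e^{-1/g(t)}, t]` makes `1 / g`
negative.
-/

section Dmat

variable {N : ℕ}

lemma Dmat_isSymm (a b : ℝ) : (Dmat N a b).IsSymm := isSymm_diagonal _

lemma Dmat_posSemidef {a b : ℝ} (ha : 0 ≤ a) (hb : 0 ≤ b) : (Dmat N a b).PosSemidef := by
  rw [Dmat, posSemidef_diagonal_iff]
  intro i
  split_ifs <;> assumption

lemma Dmat_add (a b a' b' : ℝ) : Dmat N a b + Dmat N a' b' = Dmat N (a + a') (b + b') := by
  rw [Dmat, Dmat, Dmat, diagonal_add]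
  congr with i
  split_ifs <;> rfl

lemma smul_Dmat (c a b : ℝ) : c • Dmat N a b = Dmat N (c * a) (c * b) := by
  rw [Dmat, Dmat, ← diagonal_smul]
  congr with i
  simp only [Pi.smul_apply, smul_eq_mul]
  split_ifs <;> rfl

lemma Dmat_zero : Dmat N 0 0 = 0 := by simp [Dmat]

lemma trace_Dmat (hN : 1 ≤ N) (a b : ℝ) : (Dmat N a b).trace = a + (N - 1) * b := by
  obtain ⟨n, rfl⟩ := Nat.exists_eq_add_of_le' hN
  simp [Dmat, trace_diagonal, Fin.sum_univ_succ]

end Dmat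

def IsRadialSupersolution (N : ℕ) (F : Matrix (Fin N) (Fin N) ℝ → ℝ) (γ μ : ℝ) (u : ℝ → ℝ) :
    Prop :=
  ContDiffOn ℝ 2 u (Ioo 0 1) ∧ (∀ r ∈ Ioo (0:ℝ) 1, 0 < u r) ∧
    ∀ r ∈ Ioo (0:ℝ) 1, F (Dmat N (deriv (deriv u) r) (deriv u r / r)) + μ * u r * r ^ (-γ) ≤ 0

lemma radialEV_eq_sSup (N : ℕ) (F : Matrix (Fin N) (Fin N) ℝ → ℝ) (γ : ℝ) :
    radialEV N F γ = sSup {μ | ∃ u, IsRadialSupersolution N F γ μ u} := rfl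

lemma hasDerivAt_mul_deriv_div {u : ℝ → ℝ} {r : ℝ} (hu : DifferentiableAt ℝ u r)
    (hu' : DifferentiableAt ℝ (deriv u) r) (hr : r ≠ 0) (hur : u r ≠ 0) :
    HasDerivAt (fun s => s * deriv u s / u s)
      ((r ^ 2 * deriv (deriv u) r / u r + r * deriv u r / u r - (r * deriv u r / u r) ^ 2) / r)
      r := by
  refine (((hasDerivAt_id' r).fun_mul hu'.hasDerivAt).fun_div hu.hasDerivAt hur).congr_deriv ?_
  field_simp
  ring

lemma riccati_bounds_of_pucciMin {n lam Lam Np Nm μ h g : ℝ} (hlam : 0 < lam) (hlL : lam ≤ Lam)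
    (hNpdef : Np = lam / Lam * (n - 1) + 1) (hNmdef : Nm = Lam / lam * (n - 1) + 1)
    (hNp : 2 < Np) (hμ : lam * (Nm - 2) ^ 2 / 4 < μ)
    (hP : lam * (h⁺ + (n - 1) * g⁺) - Lam * (h⁻ + (n - 1) * g⁻) + μ ≤ 0) :
    Lam * (h + g - g ^ 2) + μ ≤ lam * (Nm - 2) ^ 2 / 4 ∧ (0 ≤ g → h + g ≤ 0) := by
  have hLam : 0 < Lam := hlam.trans_le hlL
  have hLamNp : lam * (n - 1) = Lam * (Np - 1) := by rw [hNpdef]; field_simp; ring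
  have hlamNm : lam * (Nm - 2) = Lam * (n - 1) - lam := by rw [hNmdef]; field_simp; ring
  have hn : 1 ≤ n - 1 := by nlinarith
  rcases le_or_gt 0 g with hg | hg <;> rcases le_or_gt 0 h with hh | hh
  · rw [posPart_eq_self.2 hh, negPart_eq_zero.2 hh, posPart_eq_self.2 hg,
      negPart_eq_zero.2 hg] at hP
    nlinarith [mul_nonneg hlam.le hh, mul_nonneg (mul_nonneg hlam.le (by linarith : 0 ≤ n - 1)) hg]
  · rw [posPart_eq_zero.2 hh.le, negPart_eq_neg.2 hh.le, posPart_eq_self.2 hg,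
      negPart_eq_zero.2 hg] at hP
    have hsum : Lam * (h + g) ≤ -μ := by
      have hlamg : lam * (n - 1) * g = Lam * (Np - 1) * g := by rw [hLamNp]
      nlinarith [mul_nonneg (mul_nonneg hLam.le (by linarith : 0 ≤ Np - 2)) hg]
    exact ⟨by nlinarith, fun _ => by nlinarith⟩
  · rw [posPart_eq_self.2 hh, negPart_eq_zero.2 hh, posPart_eq_zero.2 hg.le,
      negPart_eq_neg.2 hg.le] at hP
    refine ⟨?_, fun hg' => absurd hg' hg.not_ge⟩
    have hlamg : Lam * (n - 1) * g = lam * (Nm - 1) * g := by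
      rw [show lam * (Nm - 1) = lam * (Nm - 2) + lam by ring, hlamNm]; ring
    have hlow : lam * (h + g - g ^ 2) + μ ≤ lam * (Nm - 2) ^ 2 / 4 := by
      nlinarith [mul_nonneg hlam.le (sq_nonneg (g + (Nm - 2) / 2))]
    have hneg : h + g - g ^ 2 ≤ 0 := by nlinarith
    nlinarith [mul_nonpos_of_nonneg_of_nonpos (sub_nonneg.2 hlL) hneg]
  · rw [posPart_eq_zero.2 hh.le, negPart_eq_neg.2 hh.le, posPart_eq_zero.2 hg.le,
      negPart_eq_neg.2 hg.le] at hP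
    refine ⟨?_, fun hg' => absurd hg' hg.not_ge⟩
    -- `λ (λ (Nm - 2)² - Λ (n - 2)²) = (Λ - λ) (Λ (n - 1)² - λ)`
    have hcomp : Lam * (n - 2) ^ 2 ≤ lam * (Nm - 2) ^ 2 := by
      refine le_of_mul_le_mul_left ?_ hlam
      rw [show lam * (lam * (Nm - 2) ^ 2) = (lam * (Nm - 2)) ^ 2 by ring, hlamNm]
      have hn2 : Lam ≤ Lam * (n - 1) ^ 2 := le_mul_of_one_le_right hLam.le (one_le_pow₀ hn)
      nlinarith [mul_nonneg (sub_nonneg.2 hlL) (by linarith : 0 ≤ Lam * (n - 1) ^ 2 - lam)]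
    nlinarith [mul_nonneg hLam.le (sq_nonneg (g + (n - 2) / 2))]

lemma tendsto_nhdsGT_zero_atTop_of_mul_deriv_le {g : ℝ → ℝ} {ε : ℝ} (hε : 0 < ε)
    (hg : ∀ r ∈ Ioo (0:ℝ) 1, DifferentiableAt ℝ g r)
    (hdec : ∀ r ∈ Ioo (0:ℝ) 1, r * deriv g r ≤ -ε) : Tendsto g (𝓝[>] 0) atTop := by
  have hanti : AntitoneOn (fun r => g r + ε * log r) (Ioo 0 1) := by
    refine antitoneOn_of_hasDerivWithinAt_nonpos (f' := fun r => deriv g r + ε * r⁻¹)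
      (convex_Ioo 0 1) (fun r hr => ?_) (fun r hr => ?_) (fun r hr => ?_)
    · exact ((hg r hr).continuousAt.add
        (continuousAt_const.mul (continuousAt_log hr.1.ne'))).continuousWithinAt
    all_goals simp only [interior_Ioo] at hr ⊢
    · exact ((hg r hr).hasDerivAt.add ((hasDerivAt_log hr.1.ne').const_mul ε)).hasDerivWithinAt
    · have hr0 := hr.1
      have h := hdec r hr
      have : r * (deriv g r + ε * r⁻¹) ≤ 0 := by field_simp; linarith
      exact nonpos_of_mul_nonpos_right this hr0
  have hlow : ∀ r ∈ Ioo (0:ℝ) (1/2), g (1/2) + ε * log (1/2) + -ε * log r ≤ g r := by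
    intro r hr
    have := hanti ⟨hr.1, by linarith [hr.2]⟩ ⟨by norm_num, by norm_num⟩ hr.2.le
    simp only at this
    linarith
  exact tendsto_atTop_mono' _ (eventually_of_mem (Ioo_mem_nhdsGT (by norm_num)) hlow)
    (tendsto_atTop_add_const_left _ _
      (tendsto_log_nhdsGT_zero.const_mul_atBot_of_neg (neg_neg_of_pos hε)))

lemma log_sub_log_le_inv_sub_inv_of_riccati {g : ℝ → ℝ} {s t : ℝ} (hs : 0 < s) (hst : s ≤ t)
    (hg : ∀ r ∈ Icc s t, DifferentiableAt ℝ g r) (hpos : ∀ r ∈ Icc s t, 0 < g r)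
    (hric : ∀ r ∈ Icc s t, r * deriv g r ≤ -g r ^ 2) :
    log t - log s ≤ (g t)⁻¹ - (g s)⁻¹ := by
  have hderiv : ∀ r ∈ Icc s t,
      HasDerivAt (fun r => (g r)⁻¹ - log r) (-deriv g r / g r ^ 2 - r⁻¹) r := fun r hr =>
    ((hg r hr).hasDerivAt.inv (hpos r hr).ne').sub (hasDerivAt_log (hs.trans_le hr.1).ne')
  have hmono : MonotoneOn (fun r => (g r)⁻¹ - log r) (Icc s t) := by
    refine monotoneOn_of_hasDerivWithinAt_nonneg (convex_Icc s t)
      (fun r hr => (hderiv r hr).continuousAt.continuousWithinAt)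
      (fun r hr => (hderiv r (interior_subset hr)).hasDerivWithinAt) (fun r hr => ?_)
    have hr := interior_subset hr
    have hr0 := hs.trans_le hr.1
    have hg0 := hpos r hr
    have h := hric r hr
    rw [show -deriv g r / g r ^ 2 - r⁻¹ = (-(r * deriv g r) - g r ^ 2) / (r * g r ^ 2) by
      field_simp]
    exact div_nonneg (by linarith) (by positivity)
  have := hmono (left_mem_Icc.2 hst) (right_mem_Icc.2 hst) hst
  simp only at this
  linarith

lemma riccati_blowup {g : ℝ → ℝ} {ε : ℝ} (hε : 0 < ε)
    (hg : ∀ r ∈ Ioo (0:ℝ) 1, DifferentiableAt ℝ g r)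
    (hdec : ∀ r ∈ Ioo (0:ℝ) 1, r * deriv g r ≤ -ε)
    (hric : ∀ r ∈ Ioo (0:ℝ) 1, 0 < g r → r * deriv g r ≤ -g r ^ 2) : False := by
  obtain ⟨t, ht, hsub⟩ := mem_nhdsGT_iff_exists_Ioc_subset.1 <| inter_mem
    ((tendsto_nhdsGT_zero_atTop_of_mul_deriv_le hε hg hdec).eventually_gt_atTop 0)
    (Ioo_mem_nhdsGT one_pos)
  have ht : 0 < t := ht
  have hgt : 0 < g t := (hsub (right_mem_Ioc.2 ht)).1
  set s := t * exp (-(g t)⁻¹)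
  have hs : 0 < s := by positivity
  have hst : s ≤ t := mul_le_of_le_one_right (le_of_lt ht) (exp_le_one_iff.2 (by simp [hgt.le]))
  have hIcc : Icc s t ⊆ Ioc 0 t := fun r hr => ⟨hs.trans_le hr.1, hr.2⟩
  have key := log_sub_log_le_inv_sub_inv_of_riccati hs hst
    (fun r hr => hg r (hsub (hIcc hr)).2) (fun r hr => (hsub (hIcc hr)).1)
    (fun r hr => hric r (hsub (hIcc hr)).2 (hsub (hIcc hr)).1)
  rw [log_mul ht.ne' (exp_pos _).ne', log_exp] at key
  have : 0 < (g s)⁻¹ := inv_pos.2 (hsub (hIcc (left_mem_Icc.2 hst))).1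
  linarith

section

variable {N : ℕ} {lam Lam : ℝ} {F : Matrix (Fin N) (Fin N) ℝ → ℝ}

lemma PosHomog.map_zero (hF : PosHomog N F) : F 0 = 0 := by
  have := hF 2 two_pos 0
  rw [smul_zero] at this
  linarith

lemma UnifElliptic.Dmat_bounds (hF : UnifElliptic N lam Lam F) (hF0 : F 0 = 0) (hN : 1 ≤ N)
    (a b : ℝ) :
    lam * (a⁺ + (N - 1) * b⁺) - Lam * (a⁻ + (N - 1) * b⁻) ≤ F (Dmat N a b) ∧
      F (Dmat N a b) ≤ Lam * (a⁺ + (N - 1) * b⁺) - lam * (a⁻ + (N - 1) * b⁻) := by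
  have hP := hF (Dmat N (-a⁻) (-b⁻)) (Dmat N a⁺ b⁺) (Dmat_isSymm _ _)
    (Dmat_posSemidef (posPart_nonneg a) (posPart_nonneg b))
  have hQ := hF (Dmat N (-a⁻) (-b⁻)) (Dmat N a⁻ b⁻) (Dmat_isSymm _ _)
    (Dmat_posSemidef (negPart_nonneg a) (negPart_nonneg b))
  rw [Dmat_add, neg_add_eq_sub, neg_add_eq_sub, posPart_sub_negPart, posPart_sub_negPart,
    trace_Dmat hN] at hP
  rw [Dmat_add, neg_add_cancel, neg_add_cancel, Dmat_zero, hF0, trace_Dmat hN] at hQ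
  constructor <;> linarith [hP.1, hP.2, hQ.1, hQ.2]

lemma PosHomog.scaled_supersolution (hF : PosHomog N F) {u : ℝ → ℝ} {μ r : ℝ} (hr : 0 < r)
    (hur : 0 < u r)
    (h : F (Dmat N (deriv (deriv u) r) (deriv u r / r)) + μ * u r * r ^ (-2 : ℝ) ≤ 0) :
    F (Dmat N (r ^ 2 * deriv (deriv u) r / u r) (r * deriv u r / u r)) + μ ≤ 0 := by
  have hD : Dmat N (r ^ 2 * deriv (deriv u) r / u r) (r * deriv u r / u r)
      = (r ^ 2 / u r) • Dmat N (deriv (deriv u) r) (deriv u r / r) := by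
    rw [smul_Dmat]
    congr 1 <;> field_simp
  have hμ : r ^ 2 / u r * (μ * u r * r ^ (-2 : ℝ)) = μ := by
    rw [rpow_neg hr.le, rpow_two]
    field_simp
  have hc : 0 < r ^ 2 / u r := by positivity
  have := mul_nonpos_of_nonneg_of_nonpos hc.le h
  rwa [mul_add, hμ, ← hF _ hc, ← hD] at this

lemma isRadialSupersolution_rpow_neg (hF : UnifElliptic N lam Lam F) (hF3 : PosHomog N F)
    (hN : 1 ≤ N) {β : ℝ} (hβ : 0 ≤ β) :
    IsRadialSupersolution N F 2 (lam * (N - 1) * β - Lam * β * (β + 1)) (fun r => r ^ (-β)) := by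
  refine ⟨fun r hr => (contDiffAt_rpow_const_of_ne hr.1.ne').contDiffWithinAt,
    fun r hr => rpow_pos_of_pos hr.1 _, fun r hr => ?_⟩
  have hr := hr.1
  have hexp : r ^ (-β - 1 - 1) = r ^ (-β - 2) := by ring_nf
  have hdiv : r ^ (-β - 1) / r = r ^ (-β - 2) := by rw [← rpow_sub_one hr.ne']; ring_nf
  have hmul : r ^ (-β) * r ^ (-2 : ℝ) = r ^ (-β - 2) := by rw [← rpow_add hr]; ring_nf
  have hD : Dmat N (deriv (deriv fun r => r ^ (-β)) r) (deriv (fun r => r ^ (-β)) r / r)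
      = r ^ (-β - 2) • Dmat N (β * (β + 1)) (-β) := by
    simp only [deriv_rpow_const', deriv_const_mul_field', smul_Dmat, mul_div_assoc, hexp, hdiv]
    congr 1 <;> ring
  have hupper := (hF.Dmat_bounds hF3.map_zero hN (β * (β + 1)) (-β)).2
  rw [posPart_eq_self.2 (by positivity), negPart_eq_zero.2 (by positivity),
    posPart_eq_zero.2 (by linarith), negPart_eq_neg.2 (by linarith), neg_neg] at hupper
  rw [hD, hF3 _ (rpow_pos_of_pos hr _), mul_assoc _ (r ^ (-β)), hmul]
  have hkey : F (Dmat N (β * (β + 1)) (-β)) + (lam * (N - 1) * β - Lam * β * (β + 1)) ≤ 0 := by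
    linarith
  linarith [mul_nonpos_of_nonneg_of_nonpos (rpow_nonneg hr.le (-β - 2)) hkey]

lemma IsRadialSupersolution.le_lam_mul_sq_div_four (hF1 : UnifElliptic N lam Lam F)
    (hF3 : PosHomog N F) (hN : 1 ≤ N) (hlam : 0 < lam) (hlL : lam ≤ Lam) {Np Nm : ℝ}
    (hNpdef : Np = lam / Lam * ((N : ℝ) - 1) + 1) (hNmdef : Nm = Lam / lam * ((N : ℝ) - 1) + 1)
    (hNp : 2 < Np) {μ : ℝ} {u : ℝ → ℝ} (hu : IsRadialSupersolution N F 2 μ u) :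
    μ ≤ lam * (Nm - 2) ^ 2 / 4 := by
  obtain ⟨hu2, hpos, hsuper⟩ := hu
  by_contra! hμ
  have hdu : ContDiffOn ℝ 1 (deriv u) (Ioo 0 1) := hu2.deriv_of_isOpen isOpen_Ioo (by norm_num)
  set g : ℝ → ℝ := fun s => s * deriv u s / u s
  have hg : ∀ r ∈ Ioo (0:ℝ) 1, HasDerivAt g
      ((r ^ 2 * deriv (deriv u) r / u r + g r - g r ^ 2) / r) r := fun r hr =>
    hasDerivAt_mul_deriv_div
      ((hu2.contDiffAt (Ioo_mem_nhds hr.1 hr.2)).differentiableAt (by norm_num))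
      ((hdu.contDiffAt (Ioo_mem_nhds hr.1 hr.2)).differentiableAt (by norm_num))
      hr.1.ne' (hpos r hr).ne'
  have hric : ∀ r ∈ Ioo (0:ℝ) 1, Lam * (r * deriv g r) + μ ≤ lam * (Nm - 2) ^ 2 / 4 ∧
      (0 ≤ g r → r * deriv g r ≤ -g r ^ 2) := by
    intro r hr
    have hscaled : F (Dmat N (r ^ 2 * deriv (deriv u) r / u r) (g r)) + μ ≤ 0 :=
      hF3.scaled_supersolution hr.1 (hpos r hr) (hsuper r hr)
    have hP := (hF1.Dmat_bounds hF3.map_zero hN (r ^ 2 * deriv (deriv u) r / u r) (g r)).1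
    obtain ⟨h1, h2⟩ := riccati_bounds_of_pucciMin hlam hlL hNpdef hNmdef hNp hμ
      (h := r ^ 2 * deriv (deriv u) r / u r) (g := g r) (by linarith)
    rw [(hg r hr).deriv, mul_div_cancel₀ _ hr.1.ne']
    exact ⟨h1, fun hg0 => by linarith [h2 hg0]⟩
  have hLam : 0 < Lam := hlam.trans_le hlL
  refine riccati_blowup (ε := (μ - lam * (Nm - 2) ^ 2 / 4) / Lam) (div_pos (by linarith) hLam)
    (fun r hr => (hg r hr).differentiableAt) (fun r hr => ?_)
    (fun r hr hg0 => (hric r hr).2 hg0.le)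
  rw [le_neg, div_le_iff₀ hLam]
  linarith [(hric r hr).1]

end

theorem stmt4_general (N : ℕ) (hN : 2 ≤ N) (lam Lam : ℝ) (hlam : 0 < lam) (hlL : lam ≤ Lam)
    (Np Nm : ℝ) (hNpdef : Np = lam / Lam * ((N : ℝ) - 1) + 1)
    (hNmdef : Nm = Lam / lam * ((N : ℝ) - 1) + 1) (hNp : 2 < Np)
    (F : Matrix (Fin N) (Fin N) ℝ → ℝ)
    (hF1 : UnifElliptic N lam Lam F) (hF3 : PosHomog N F) :
    Lam * (Np - 2) ^ 2 / 4 ≤ radialEV N F 2 ∧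
    radialEV N F 2 ≤ lam * (Nm - 2) ^ 2 / 4 := by
  have hN1 : 1 ≤ N := by omega
  have hbound : ∀ μ ∈ {μ | ∃ u, IsRadialSupersolution N F 2 μ u}, μ ≤ lam * (Nm - 2) ^ 2 / 4 :=
    fun μ ⟨u, hu⟩ => hu.le_lam_mul_sq_div_four hF1 hF3 hN1 hlam hlL hNpdef hNmdef hNp
  have hwitness : ∃ u, IsRadialSupersolution N F 2 (Lam * (Np - 2) ^ 2 / 4) u := by
    have hLam : 0 < Lam := hlam.trans_le hlL
    have hμ : lam * ((N : ℝ) - 1) * ((Np - 2) / 2) - Lam * ((Np - 2) / 2) * ((Np - 2) / 2 + 1)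
        = Lam * (Np - 2) ^ 2 / 4 := by
      rw [hNpdef]; field_simp; ring
    exact ⟨_, hμ ▸ isRadialSupersolution_rpow_neg hF1 hF3 hN1 (by linarith)⟩
  rw [radialEV_eq_sSup]
  exact ⟨le_csSup ⟨_, hbound⟩ hwitness, csSup_le ⟨_, hwitness⟩ hbound⟩

theorem stmt4 (N : ℕ) (hN : 2 ≤ N) (lam Lam : ℝ) (hlam : 0 < lam) (hlL : lam ≤ Lam)
    (Np Nm : ℝ) (hNpdef : Np = lam / Lam * ((N : ℝ) - 1) + 1)
    (hNmdef : Nm = Lam / lam * ((N : ℝ) - 1) + 1) (hNp : 2 < Np)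
    (F : Matrix (Fin N) (Fin N) ℝ → ℝ)
    (hF1 : UnifElliptic N lam Lam F) (hF2 : RotInvariant N F) (hF3 : PosHomog N F) :
    Lam * (Np - 2) ^ 2 / 4 ≤ radialEV N F 2 ∧
    radialEV N F 2 ≤ lam * (Nm - 2) ^ 2 / 4 :=
  stmt4_general N hN lam Lam hlam hlL Np Nm hNpdef hNmdef hNp F hF1 hF3

end
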